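/- arXiv:2403.16267 — 5 statements merged into one kernel-verified Lean document; each statement's English description precedes it below -/
import Mathlib

section
/- In a regular category, if f : Y → X is a regular epimorphism and there exists a regular epimorphism X' → X such that the base change f' : Y ×_X X' → X' of f is an isomorphism, then f is an isomorphism. -/
open CategoryTheory CategoryTheory.Limits

/-- In a regular category, if `f : Y ⟶ X` is a regular epimorphism whose base change along
some regular epimorphism `X' ⟶ X` is an isomorphism, then `f` is an isomorphism. -/
theorem stmt2 {C : Type*} [Category C] [HasFiniteLimits C]
    (hcoeq : ∀ {A B : C} (f : A ⟶ B), HasCoequalizer (pullback.fst f f) (pullback.snd f f))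
    (hstable : ∀ {A B B' : C} (f : A ⟶ B) (g : B' ⟶ B),
      RegularEpi f → RegularEpi (pullback.snd f g))
    {Y X X' : C} (f : Y ⟶ X) (g : X' ⟶ X)
    (hf : RegularEpi f) (hg : RegularEpi g)
    (hiso : IsIso (pullback.snd f g)) : IsIso f := by
  haveI := hf
  haveI := hg
  -- kernel pair projections p1 = pullback.fst f f, p2 = pullback.snd f f
  haveI := hstable g (pullback.fst f f ≫ f) hg
  have hepi : Epi (pullback.snd g (pullback.fst f f ≫ f)) := RegularEpi.epi _ (hstable g (pullback.fst f f ≫ f) hg)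
  have hcond : pullback.fst g (pullback.fst f f ≫ f) ≫ g =
      pullback.snd g (pullback.fst f f ≫ f) ≫ (pullback.fst f f ≫ f) := pullback.condition
  have hker : pullback.fst f f ≫ f = pullback.snd f f ≫ f := pullback.condition
  have w1 : (pullback.snd g (pullback.fst f f ≫ f) ≫ pullback.fst f f) ≫ f =
      pullback.fst g (pullback.fst f f ≫ f) ≫ g := by
    rw [hcond, Category.assoc]
  have w2 : (pullback.snd g (pullback.fst f f ≫ f) ≫ pullback.snd f f) ≫ f =
      pullback.fst g (pullback.fst f f ≫ f) ≫ g := by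
    rw [hcond, Category.assoc, ← hker]
  have hlift : pullback.lift _ _ w1 = pullback.lift _ _ w2 := by
    rw [← cancel_mono (pullback.snd f g)]
    rw [pullback.lift_snd, pullback.lift_snd]
  have key : pullback.snd g (pullback.fst f f ≫ f) ≫ pullback.fst f f =
      pullback.snd g (pullback.fst f f ≫ f) ≫ pullback.snd f f := by
    have h1 := pullback.lift_fst _ _ w1
    have h2 := pullback.lift_fst _ _ w2
    rw [← h1, ← h2, hlift]
  have hpeq : (pullback.fst f f : pullback f f ⟶ Y) = pullback.snd f f := by
    rwa [cancel_epi (pullback.snd g (pullback.fst f f ≫ f))] at key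
  have hmf : Mono f := by
    constructor
    intro Z u v huv
    have hu : pullback.lift u v huv ≫ pullback.fst f f = u := pullback.lift_fst _ _ _
    have hv : pullback.lift u v huv ≫ pullback.snd f f = v := pullback.lift_snd _ _ _
    exact hu.symm.trans ((congrArg (CategoryStruct.comp (pullback.lift u v huv)) hpeq).trans hv)
  haveI : StrongEpi f := by haveI := isRegularEpi_of_regularEpi hf; infer_instance
  exact isIso_of_mono_of_strongEpi f
end

section
/- In a regular category, let A be a subobject of X × X that surjects onto both factors (an ample relation), and let B = A ∘ A^t be the composition of A with its transpose. Then B contains the diagonal Δ_X; moreover, if B = Δ_X then the second projection p₂ : A → X is an isomorphism. -/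
open CategoryTheory CategoryTheory.Limits

section

variable {C : Type*} [Category C] [HasFiniteLimits C] [HasImages C]

omit [HasFiniteLimits C] [HasImages C] in
lemma mapObjMk {X Y Z : C} (f : Y ⟶ Z) [Mono f] (g : X ⟶ Y) [Mono g] :
    (Subobject.map f).obj (Subobject.mk g) = Subobject.mk (g ≫ f) := by
  apply Quotient.sound
  exact ⟨MonoOver.isoMk (Iso.refl _) (by simp)⟩

/-- The transpose of a relation `A ⊆ X × X`, via the braiding of the product. -/
noncomputable def relTranspose (X : C) (A : Subobject (X ⨯ X)) : Subobject (X ⨯ X) :=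
  (Subobject.map (prod.braiding X X).hom).obj A

/-- The composition `B ∘ A` of relations `A, B ⊆ X × X` (first `A`, then `B`), where a
relation is a subobject of `X ⨯ X` with first coordinate the target and second the source:
it is the image in `X ⨯ X` of `B ×_X A`. -/
noncomputable def relComp (X : C) (A B : Subobject (X ⨯ X)) : Subobject (X ⨯ X) :=
  imageSubobject (prod.lift
    (pullback.fst (B.arrow ≫ prod.snd) (A.arrow ≫ prod.fst) ≫ B.arrow ≫ prod.fst)
    (pullback.snd (B.arrow ≫ prod.snd) (A.arrow ≫ prod.fst) ≫ A.arrow ≫ prod.snd))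

/-- The diagonal `Δ_X` as a subobject of `X ⨯ X`. -/
noncomputable def diagSubobject (X : C) : Subobject (X ⨯ X) := Subobject.mk (diag X)

/-- In a regular category, if `A ⊆ X × X` is an ample relation (both projections are regular
epimorphisms) and `B = A ∘ Aᵗ`, then `B` contains the diagonal, and if `B` equals the
diagonal then the second projection `p₂ : A → X` is an isomorphism. -/
theorem stmt4
    (hcoeq : ∀ {A B : C} (f : A ⟶ B), HasCoequalizer (pullback.fst f f) (pullback.snd f f))
    (hstable : ∀ {A B B' : C} (f : A ⟶ B) (g : B' ⟶ B),
      RegularEpi f → RegularEpi (pullback.snd f g))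
    (X : C) (A : Subobject (X ⨯ X))
    (h1 : RegularEpi (A.arrow ≫ prod.fst))
    (h2 : RegularEpi (A.arrow ≫ prod.snd)) :
    diagSubobject X ≤ relComp X (relTranspose X A) A ∧
      (relComp X (relTranspose X A) A = diagSubobject X →
        IsIso (A.arrow ≫ prod.snd)) := by
  have hT : relTranspose X A = Subobject.mk (A.arrow ≫ (prod.braiding X X).hom) := by
    rw [relTranspose, ← Subobject.mk_arrow A, mapObjMk, Subobject.mk_arrow]
  rw [hT]
  set f₀ : (A : C) ⟶ X ⨯ X := A.arrow ≫ (prod.braiding X X).hom with hf₀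
  set T := Subobject.mk f₀ with hTdef
  obtain ⟨u, hu⟩ : ∃ u : (T : C) ≅ (A : C), u.inv ≫ T.arrow = f₀ :=
    ⟨Subobject.underlyingIso f₀, Subobject.underlyingIso_arrow f₀⟩
  have hu2 : T.arrow = u.hom ≫ f₀ := (Iso.inv_comp_eq u).mp hu
  set g₁ := A.arrow ≫ prod.snd with hg₁
  set g₂ := T.arrow ≫ prod.fst with hg₂
  set F : pullback g₁ g₂ ⟶ X ⨯ X := prod.lift
    (pullback.fst g₁ g₂ ≫ A.arrow ≫ prod.fst)
    (pullback.snd g₁ g₂ ≫ T.arrow ≫ prod.snd) with hF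
  have hrc : relComp X T A = imageSubobject F := rfl
  have hTfst : T.arrow ≫ prod.fst = u.hom ≫ A.arrow ≫ prod.snd := by
    rw [hu2, hf₀]; simp [prod.lift_fst]
  have hTsnd : T.arrow ≫ prod.snd = u.hom ≫ A.arrow ≫ prod.fst := by
    rw [hu2, hf₀]; simp [prod.lift_snd]
  have hdcond : 𝟙 (A : C) ≫ g₁ = u.inv ≫ g₂ := by
    rw [hg₁, hg₂, Category.id_comp, ← Category.assoc, hu, hf₀]
    simp [prod.lift_fst]
  set d : (A : C) ⟶ pullback g₁ g₂ := pullback.lift (𝟙 _) u.inv hdcond with hd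
  have hdF : d ≫ F = (A.arrow ≫ prod.fst) ≫ diag X := by
    apply Limits.prod.hom_ext
    · simp [hd, hF, prod.lift_fst, pullback.lift_fst_assoc]
    · simp [hd, hF, hTsnd, prod.lift_snd, pullback.lift_snd_assoc]
  constructor
  · -- diagonal ≤ relComp
    rw [hrc, diagSubobject]
    haveI := isRegularEpi_of_regularEpi h1
    haveI : StrongEpi (A.arrow ≫ prod.fst) := inferInstance
    have sq : CommSq (d ≫ factorThruImageSubobject F) (A.arrow ≫ prod.fst)
        (imageSubobject F).arrow (diag X) := ⟨by simp [hdF]⟩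
    exact Subobject.mk_le_of_comm sq.lift sq.fac_right
  · -- equality case
    intro heq
    rw [hrc, diagSubobject] at heq
    have harr : (imageSubobject F).arrow ≫ prod.fst = (imageSubobject F).arrow ≫ prod.snd := by
      rw [heq]
      have h' : (Subobject.underlyingIso (diag X)).inv ≫ (Subobject.mk (diag X)).arrow = diag X :=
        Subobject.underlyingIso_arrow _
      rw [Iso.inv_comp_eq] at h'
      rw [h']; simp [prod.lift_fst, prod.lift_snd]
    have hFeq : F ≫ prod.fst = F ≫ prod.snd := by
      rw [← imageSubobject_arrow_comp F, Category.assoc, Category.assoc, harr]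
    haveI : Mono (A.arrow ≫ prod.snd) := by
      constructor
      intro W a b hab
      have hcond : a ≫ g₁ = (b ≫ u.inv) ≫ g₂ := by
        rw [hg₁, hg₂, Category.assoc, hTfst]
        simp [hab]
      set q : W ⟶ pullback g₁ g₂ := pullback.lift a (b ≫ u.inv) hcond with hq
      have h5 : a ≫ A.arrow ≫ prod.fst = b ≫ A.arrow ≫ prod.fst := by
        have := q ≫= hFeq
        rw [hF] at this
        simpa [hq, hTsnd, prod.lift_fst, prod.lift_snd, pullback.lift_fst_assoc, pullback.lift_snd_assoc] using this
      have hae : a ≫ A.arrow = b ≫ A.arrow := by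
        apply Limits.prod.hom_ext <;> simp only [Category.assoc]
        · exact h5
        · simpa only [hg₁, Category.assoc] using hab
      exact (cancel_mono A.arrow).mp hae
    exact isIso_of_regularEpi_of_mono _ h2
end
end

section
/- Let G be a pro-oligomorphic group, X a transitive smooth G-set, and f : Y → X a G-equivariant map with finite fibers where Y is smooth. Then there exists a transitive smooth G-set X' and a G-map X' → X such that the base change Y ×_X X' → X' is isomorphic over X' to a finite disjoint union of copies of X'. -/
/-- Let `G` be a pro-oligomorphic group (Hausdorff, non-archimedean, Roelcke-precompact
topological group), `X` a transitive smooth `G`-set and `f : Y → X` an equivariant map with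
finite fibers, `Y` smooth.  Then there is a transitive smooth `G`-set `X'` with a `G`-map
`p : X' → X` such that the base change of `f` along `p` is a trivial finite cover, i.e. there
are finitely many equivariant sections `t 0, …, t (n-1)` of the pulled-back cover which are
disjoint and jointly exhaust it. -/
theorem stmt8 (G : Type) [Group G] [TopologicalSpace G] [IsTopologicalGroup G] [T2Space G]
    (hbasis : ∀ s ∈ nhds (1 : G), ∃ U : Subgroup G, IsOpen (U : Set G) ∧ (U : Set G) ⊆ s)
    (hroelcke : ∀ U V : Subgroup G, IsOpen (U : Set G) → IsOpen (V : Set G) →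
      Finite (Quot (fun a b : G => ∃ u ∈ U, ∃ v ∈ V, u * a * v = b)))
    (X : Type) [MulAction G X]
    (hXsmooth : ∀ x : X, IsOpen {g : G | g • x = x})
    (hXtrans : ∀ x y : X, ∃ g : G, g • x = y) (hXne : Nonempty X)
    (Y : Type) [MulAction G Y]
    (hYsmooth : ∀ y : Y, IsOpen {g : G | g • y = y})
    (f : Y → X) (hf : ∀ (g : G) (y : Y), f (g • y) = g • f y)
    (hfib : ∀ x : X, Finite {y : Y // f y = x}) :
    ∃ (X' : Type) (σ : G → X' → X'),
      (∀ a : X', σ 1 a = a) ∧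
      (∀ (g h : G) (a : X'), σ (g * h) a = σ g (σ h a)) ∧
      (∀ a : X', IsOpen {g : G | σ g a = a}) ∧
      Nonempty X' ∧ (∀ a b : X', ∃ g : G, σ g a = b) ∧
      ∃ p : X' → X, (∀ (g : G) (a : X'), p (σ g a) = g • p a) ∧
        ∃ (n : ℕ) (t : Fin n → X' → Y),
          (∀ i a, f (t i a) = p a) ∧
          (∀ (g : G) (i : Fin n) (a : X'), t i (σ g a) = g • t i a) ∧
          (∀ (i j : Fin n) (a : X'), t i a = t j a → i = j) ∧
          (∀ (a : X') (y : Y), f y = p a → ∃ i, t i a = y) := by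
  classical
  obtain ⟨x₀⟩ := hXne
  haveI : Finite {y : Y // f y = x₀} := hfib x₀
  obtain ⟨n, ⟨e⟩⟩ := Finite.exists_equiv_fin {y : Y // f y = x₀}
  -- the open subgroup V
  set V : Subgroup G :=
    MulAction.stabilizer G x₀ ⊓ ⨅ y : {y : Y // f y = x₀}, MulAction.stabilizer G (y : Y)
    with hV
  have hVmem : ∀ g : G, g ∈ V ↔ g • x₀ = x₀ ∧ ∀ y : {y : Y // f y = x₀}, g • (y : Y) = (y : Y) := by
    intro g
    simp [hV, Subgroup.mem_inf, Subgroup.mem_iInf, MulAction.mem_stabilizer_iff]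
  have hVopen : IsOpen (V : Set G) := by
    have : (V : Set G) = {g : G | g • x₀ = x₀} ∩ ⋂ y : {y : Y // f y = x₀}, {g : G | g • (y : Y) = (y : Y)} := by
      ext g
      simp [hVmem g, Set.mem_iInter]
    rw [this]
    exact (hXsmooth x₀).inter (isOpen_iInter_of_finite fun y => hYsmooth (y : Y))
  refine ⟨G ⧸ V, fun g a => g • a, fun a => one_smul G a, fun g h a => mul_smul g h a, ?_, ⟨(1 : G)⟩, ?_, ?_⟩
  · -- open stabilizers
    intro a
    induction a using QuotientGroup.induction_on with
    | H b =>
      have : {g : G | g • (b : G ⧸ V) = (b : G ⧸ V)} = (fun g => b⁻¹ * g * b) ⁻¹' (V : Set G) := by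
        ext g
        simp only [Set.mem_setOf_eq, Set.mem_preimage, SetLike.mem_coe]
        rw [MulAction.Quotient.smul_mk, QuotientGroup.eq]
        constructor
        · intro h
          have := (V.inv_mem_iff).2 h
          simpa [mul_assoc] using this
        · intro h
          have := (V.inv_mem_iff).2 h
          simpa [mul_assoc] using this
      rw [this]
      exact hVopen.preimage (by continuity)
  · -- transitivity
    intro a b
    induction a using QuotientGroup.induction_on with
    | H a =>
      induction b using QuotientGroup.induction_on with
      | H b =>
        exact ⟨b * a⁻¹, by show (b * a⁻¹) • (a : G ⧸ V) = (b : G ⧸ V); rw [MulAction.Quotient.smul_mk]; simp [smul_eq_mul, mul_assoc]⟩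
  · -- the map p and sections
    have hp : ∀ a b : G, (QuotientGroup.leftRel V).r a b → a • x₀ = b • x₀ := by
      intro a b hab
      rw [QuotientGroup.leftRel_apply] at hab
      have h1 : (a⁻¹ * b) • x₀ = x₀ := ((hVmem _).1 hab).1
      calc a • x₀ = a • (a⁻¹ * b) • x₀ := by rw [h1]
        _ = b • x₀ := by rw [← mul_smul]; simp
    refine ⟨fun a => Quotient.liftOn' a (fun g => g • x₀) hp, ?_, n, ?_⟩
    · intro g a
      induction a using QuotientGroup.induction_on with
      | H b =>
        show Quotient.liftOn' (g • (b : G ⧸ V)) _ _ = _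
        rw [MulAction.Quotient.smul_mk]
        show (g • b) • x₀ = g • (b • x₀)
        rw [smul_eq_mul, mul_smul]
    · have ht : ∀ (i : Fin n) (a b : G), (QuotientGroup.leftRel V).r a b →
          a • ((e.symm i : {y : Y // f y = x₀}) : Y) = b • ((e.symm i : {y : Y // f y = x₀}) : Y) := by
        intro i a b hab
        rw [QuotientGroup.leftRel_apply] at hab
        have h1 : (a⁻¹ * b) • ((e.symm i : {y : Y // f y = x₀}) : Y) = _ := ((hVmem _).1 hab).2 (e.symm i)
        calc a • ((e.symm i : {y : Y // f y = x₀}) : Y) = a • (a⁻¹ * b) • ((e.symm i : {y : Y // f y = x₀}) : Y) := by rw [h1]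
          _ = b • _ := by rw [← mul_smul]; simp
    
      refine ⟨fun i a => Quotient.liftOn' a (fun g => g • ((e.symm i : {y : Y // f y = x₀}) : Y)) (ht i), ?_, ?_, ?_, ?_⟩
      · intro i a
        induction a using QuotientGroup.induction_on with
        | H b =>
          show f (b • _) = b • x₀
          rw [hf, (e.symm i).2]
      · intro g i a
        induction a using QuotientGroup.induction_on with
        | H b =>
          show Quotient.liftOn' (g • (b : G ⧸ V)) _ _ = _
          rw [MulAction.Quotient.smul_mk]
          show (g • b) • _ = g • (b • _)
          rw [smul_eq_mul, mul_smul]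
      · intro i j a h
        induction a using QuotientGroup.induction_on with
        | H b =>
          have : b • ((e.symm i : {y : Y // f y = x₀}) : Y) = b • ((e.symm j : {y : Y // f y = x₀}) : Y) := h
          have h2 : ((e.symm i : {y : Y // f y = x₀}) : Y) = ((e.symm j : {y : Y // f y = x₀}) : Y) :=
            smul_left_cancel b this
          have h3 : e.symm i = e.symm j := Subtype.ext h2
          exact e.symm.injective h3
      · intro a y hy
        induction a using QuotientGroup.induction_on with
        | H b =>
          have hy' : f y = b • x₀ := hy
          have hfy : f (b⁻¹ • y) = x₀ := by
            rw [hf, hy', ← mul_smul]; simp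
          refine ⟨e ⟨b⁻¹ • y, hfy⟩, ?_⟩
          show b • ((e.symm (e ⟨b⁻¹ • y, hfy⟩) : {y : Y // f y = x₀}) : Y) = y
          rw [e.symm_apply_apply]
          show b • b⁻¹ • y = y
          rw [← mul_smul]; simp
end

section
/- Let C be the category of finitary smooth G-sets with a k-valued measure μ. If f : Z → Y and g : Y → X are μ-constant maps with X nonempty, then g ∘ f is μ-constant and μ(g ∘ f) = μ(g)·μ(f). -/
/-- A smooth `G`-set for a topological group `G`: an action all of whose point
stabilizers are open. -/
structure GSet (G : Type) [Group G] [TopologicalSpace G] where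
  carrier : Type
  smul : G → carrier → carrier
  one_smul : ∀ x, smul 1 x = x
  mul_smul : ∀ g h x, smul (g * h) x = smul g (smul h x)
  smooth : ∀ x, IsOpen {g : G | smul g x = x}

namespace GSet

variable {G : Type} [Group G] [TopologicalSpace G]

/-- The orbit relation on a `G`-set. -/
def orbitRel (X : GSet G) (x y : X.carrier) : Prop := ∃ g, X.smul g x = y

/-- A `G`-set is finitary if it has finitely many orbits. -/
def Finitary (X : GSet G) : Prop := Finite (Quot X.orbitRel)

/-- A `G`-set is transitive (an atom) if it is nonempty and has a single orbit. -/
def Trans' (X : GSet G) : Prop := Nonempty X.carrier ∧ ∀ x y, X.orbitRel x y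

/-- Equivariance of a map of `G`-sets. -/
def Equivariant (X Y : GSet G) (f : X.carrier → Y.carrier) : Prop :=
  ∀ g x, f (X.smul g x) = Y.smul g (f x)

/-- The sub-`G`-set on an invariant subset. -/
def restrict (X : GSet G) (s : Set X.carrier) (hs : ∀ g y, y ∈ s → X.smul g y ∈ s) :
    GSet G where
  carrier := s
  smul g y := ⟨X.smul g y.1, hs g y.1 y.2⟩
  one_smul y := Subtype.ext (X.one_smul y.1)
  mul_smul g h y := Subtype.ext (X.mul_smul g h y.1)
  smooth y := by
    convert X.smooth y.1 using 1
    ext g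
    exact Subtype.ext_iff

/-- The orbit of a point, as a subset. -/
def orbitSet (X : GSet G) (x : X.carrier) : Set X.carrier := {y | X.orbitRel x y}

lemma orbitSet_inv (X : GSet G) (x : X.carrier) :
    ∀ g y, y ∈ X.orbitSet x → X.smul g y ∈ X.orbitSet x := by
  rintro g y ⟨g0, rfl⟩
  exact ⟨g * g0, X.mul_smul g g0 x⟩

/-- The orbit of a point, as a `G`-set. -/
def orbit (X : GSet G) (x : X.carrier) : GSet G :=
  X.restrict (X.orbitSet x) (X.orbitSet_inv x)

/-- The product of two `G`-sets with the diagonal action. -/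
def prodG (X Y : GSet G) : GSet G where
  carrier := X.carrier × Y.carrier
  smul g p := (X.smul g p.1, Y.smul g p.2)
  one_smul p := by simp [X.one_smul, Y.one_smul]
  mul_smul g h p := by simp [X.mul_smul, Y.mul_smul]
  smooth p := by
    have h : {g : G | (X.smul g p.1, Y.smul g p.2) = p} =
        {g | X.smul g p.1 = p.1} ∩ {g | Y.smul g p.2 = p.2} := by
      ext g; simp [Prod.ext_iff]
    exact h ▸ (X.smooth p.1).inter (Y.smooth p.2)

/-- The one-point `G`-set. -/
def pt : GSet G where
  carrier := PUnit
  smul _ x := x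
  one_smul _ := rfl
  mul_smul _ _ _ := rfl
  smooth _ := by simp

end GSet

/-- The data of a measure: a value attached to each map of `G`-sets (only its values on
equivariant maps of transitive sets matter). -/
structure Meas (G : Type) [Group G] [TopologicalSpace G] (k : Type) [CommRing k] where
  val : (Y X : GSet G) → (Y.carrier → X.carrier) → k

namespace Meas

variable {G : Type} [Group G] [TopologicalSpace G] {k : Type} [CommRing k]

/-- For `f : Y → X` with `X` transitive, `μ(f)` is the sum of the measures of the
restrictions of `f` to the orbits of `Y`. -/
noncomputable def total (μ : Meas G k) (Y X : GSet G) (f : Y.carrier → X.carrier) : k :=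
  ∑ᶠ o : Quot Y.orbitRel, μ.val (Y.orbit o.out) X (fun y => f y.1)

/-- The measure of the restriction of `f : Y → X` over the orbit of `x : X`. -/
noncomputable def fiberVal (μ : Meas G k) (Y X : GSet G) (f : Y.carrier → X.carrier)
    (hf : GSet.Equivariant Y X f) (x : X.carrier) : k :=
  μ.total
    (Y.restrict (f ⁻¹' X.orbitSet x) (fun g y hy => by
      simp only [Set.mem_preimage] at hy ⊢
      rw [hf g y]
      exact X.orbitSet_inv x g (f y) hy))
    (X.orbit x) (fun y => ⟨f y.1, y.2⟩)

/-- `f : Y → X` is `μ`-constant with value `c` if its restriction over every orbit of `X`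
has measure `c`. -/
def MuConstant (μ : Meas G k) (Y X : GSet G) (f : Y.carrier → X.carrier)
    (hf : GSet.Equivariant Y X f) (c : k) : Prop :=
  ∀ x, μ.fiberVal Y X f hf x = c

/-- The axioms of a measure: normalization on isomorphisms, multiplicativity under
composition, and invariance/additivity under base change, all for maps of atoms. -/
structure IsMeasure (μ : Meas G k) : Prop where
  iso : ∀ (Y X : GSet G) (f : Y.carrier → X.carrier), Y.Trans' → X.Trans' →
    GSet.Equivariant Y X f → Function.Bijective f → μ.val Y X f = 1
  comp : ∀ (Z Y X : GSet G) (f : Z.carrier → Y.carrier) (g : Y.carrier → X.carrier),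
    Z.Trans' → Y.Trans' → X.Trans' →
    GSet.Equivariant Z Y f → GSet.Equivariant Y X g →
    μ.val Z X (g ∘ f) = μ.val Y X g * μ.val Z Y f
  base : ∀ (Y X X' : GSet G) (f : Y.carrier → X.carrier) (g : X'.carrier → X.carrier)
    (_ : Y.Trans') (_ : X.Trans') (_ : X'.Trans')
    (hf : GSet.Equivariant Y X f) (hg : GSet.Equivariant X' X g),
    μ.val Y X f =
      μ.total ((Y.prodG X').restrict {p | f p.1 = g p.2} (fun σ p hp => by
          simp only [Set.mem_setOf_eq] at hp ⊢
          show f (Y.smul σ p.1) = g (X'.smul σ p.2)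
          rw [hf σ p.1, hg σ p.2, hp]))
        X' (fun p => p.1.2)

end Meas


section Helpers

variable {G : Type} [Group G] [TopologicalSpace G] {k : Type} [CommRing k]

lemma orbRefl (X : GSet G) (x : X.carrier) : X.orbitRel x x := ⟨1, X.one_smul x⟩

lemma orbSymm (X : GSet G) {x y : X.carrier} (h : X.orbitRel x y) : X.orbitRel y x := by
  obtain ⟨σ, h⟩ := h
  exact ⟨σ⁻¹, by rw [← h, ← X.mul_smul, inv_mul_cancel, X.one_smul]⟩

lemma orbTrans (X : GSet G) {x y z : X.carrier} (h1 : X.orbitRel x y) (h2 : X.orbitRel y z) :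
    X.orbitRel x z := by
  obtain ⟨σ, h1⟩ := h1; obtain ⟨τ, h2⟩ := h2
  exact ⟨τ * σ, by rw [X.mul_smul, h1, h2]⟩

lemma orbEquiv (X : GSet G) : Equivalence X.orbitRel :=
  ⟨orbRefl X, orbSymm X, orbTrans X⟩

lemma quotMkEq (X : GSet G) {a b : X.carrier} :
    Quot.mk X.orbitRel a = Quot.mk X.orbitRel b ↔ X.orbitRel a b :=
  ⟨fun h => (orbEquiv X).eqvGen_iff.mp (Quot.eqvGen_exact h), Quot.sound⟩

lemma outRel (W : GSet G) (q : Quot W.orbitRel) (a : W.carrier)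
    (h : Quot.mk W.orbitRel a = q) : W.orbitRel q.out a :=
  (quotMkEq W).mp ((Quot.out_eq q).trans h.symm)

lemma restrictRel (X : GSet G) (s : Set X.carrier) (hs : ∀ g y, y ∈ s → X.smul g y ∈ s)
    {a b : (X.restrict s hs).carrier} :
    (X.restrict s hs).orbitRel a b ↔ X.orbitRel a.1 b.1 := by
  constructor
  · rintro ⟨σ, h⟩; exact ⟨σ, congrArg Subtype.val h⟩
  · rintro ⟨σ, h⟩; exact ⟨σ, Subtype.ext h⟩

lemma orbitRel' (X : GSet G) (x : X.carrier) {a b : (X.orbit x).carrier} :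
    (X.orbit x).orbitRel a b ↔ X.orbitRel a.1 b.1 :=
  restrictRel X _ _

lemma orbitTrans' (X : GSet G) (x : X.carrier) : (X.orbit x).Trans' := by
  refine ⟨⟨⟨x, orbRefl X x⟩⟩, fun a b => ?_⟩
  exact (orbitRel' X x).mpr (orbTrans X (orbSymm X a.2) b.2)

lemma restrictFinite (X : GSet G) (s : Set X.carrier) (hs : ∀ g y, y ∈ s → X.smul g y ∈ s)
    (h : X.Finitary) : Finite (Quot (X.restrict s hs).orbitRel) := by
  have : Finite (Quot X.orbitRel) := h
  refine Finite.of_injective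
    (Quot.map Subtype.val (fun a b hab => (restrictRel X s hs).mp hab)) ?_
  intro a b
  induction a using Quot.ind with | _ a => ?_
  induction b using Quot.ind with | _ b => ?_
  intro hab
  exact Quot.sound ((restrictRel X s hs).mpr ((quotMkEq X).mp hab))

lemma valSquare (μ : Meas G k) (hμ : μ.IsMeasure) (A B A' B' : GSet G)
    (m : A.carrier → B.carrier) (m' : A'.carrier → B'.carrier)
    (φA : A.carrier → A'.carrier) (φB : B.carrier → B'.carrier)
    (tA : A.Trans') (tB : B.Trans') (tA' : A'.Trans') (tB' : B'.Trans')
    (em : GSet.Equivariant A B m) (em' : GSet.Equivariant A' B' m')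
    (eA : GSet.Equivariant A A' φA) (eB : GSet.Equivariant B B' φB)
    (bA : Function.Bijective φA) (bB : Function.Bijective φB)
    (comm : ∀ a, φB (m a) = m' (φA a)) :
    μ.val A B m = μ.val A' B' m' := by
  have h1 := hμ.comp A B B' m φB tA tB tB' em eB
  have h2 := hμ.comp A A' B' φA m' tA tA' tB' eA em'
  have h3 : φB ∘ m = m' ∘ φA := funext comm
  rw [hμ.iso B B' φB tB tB' eB bB, one_mul] at h1
  rw [hμ.iso A A' φA tA tA' eA bA, mul_one] at h2
  rw [← h1, h3, h2]

end Helpers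

/-- If `f : Z → Y` and `g : Y → X` are `μ`-constant maps of finitary smooth `G`-sets with
`X` nonempty, then `g ∘ f` is `μ`-constant and `μ(g ∘ f) = μ(g)·μ(f)`. -/
theorem stmt14 {G : Type} [Group G] [TopologicalSpace G] {k : Type} [CommRing k]
    (μ : Meas G k) (hμ : Meas.IsMeasure μ)
    (Z Y X : GSet G) (hZfin : Z.Finitary) (hYfin : Y.Finitary) (hXfin : X.Finitary)
    (f : Z.carrier → Y.carrier) (hf : GSet.Equivariant Z Y f)
    (g : Y.carrier → X.carrier) (hg : GSet.Equivariant Y X g)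
    (hXne : Nonempty X.carrier) (c d : k)
    (hfc : μ.MuConstant Z Y f hf c) (hgc : μ.MuConstant Y X g hg d) :
    μ.MuConstant Z X (g ∘ f)
      (fun σ z => by
        simp only [Function.comp_apply]
        rw [hf σ z, hg σ (f z)])
      (d * c) := by
  classical
  intro x
  have hRinv : ∀ (σ : G) (z : Z.carrier), z ∈ (g ∘ f) ⁻¹' X.orbitSet x →
      Z.smul σ z ∈ (g ∘ f) ⁻¹' X.orbitSet x := by
    intro σ z hz
    simp only [Set.mem_preimage, Function.comp_apply] at hz ⊢
    rw [hf σ z, hg σ (f z)]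
    exact X.orbitSet_inv x σ _ hz
  have hTinv : ∀ (σ : G) (yy : Y.carrier), yy ∈ g ⁻¹' X.orbitSet x →
      Y.smul σ yy ∈ g ⁻¹' X.orbitSet x := by
    intro σ yy hy
    simp only [Set.mem_preimage] at hy ⊢
    rw [hg σ yy]
    exact X.orbitSet_inv x σ _ hy
  let R : GSet G := Z.restrict ((g ∘ f) ⁻¹' X.orbitSet x) hRinv
  let T : GSet G := Y.restrict (g ⁻¹' X.orbitSet x) hTinv
  haveI : Finite (Quot R.orbitRel) := restrictFinite Z _ _ hZfin
  haveI : Finite (Quot T.orbitRel) := restrictFinite Y _ _ hYfin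
  haveI : Fintype (Quot R.orbitRel) := Fintype.ofFinite _
  haveI : Fintype (Quot T.orbitRel) := Fintype.ofFinite _
  let fm : R.carrier → T.carrier := fun z => ⟨f z.1, z.2⟩
  have fmrel : ∀ {a b : R.carrier}, R.orbitRel a b → T.orbitRel (fm a) (fm b) := by
    intro a b hab
    obtain ⟨σ, h⟩ := (restrictRel Z _ _).mp hab
    exact (restrictRel Y _ _).mpr ⟨σ, by rw [← hf σ a.1, h]⟩
  let π : Quot R.orbitRel → Quot T.orbitRel := Quot.map fm (fun a b hab => fmrel hab)
  have hπout : ∀ o : Quot R.orbitRel, T.orbitRel (π o).out (fm o.out) := fun o =>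
    outRel T (π o) (fm o.out) (congrArg π (Quot.out_eq o))
  let Gm : ∀ p : Quot T.orbitRel, (T.orbit p.out).carrier → (X.orbit x).carrier :=
    fun p yy => ⟨g yy.1.1, yy.1.2⟩
  let Aval : Quot T.orbitRel → k := fun p => μ.val (T.orbit p.out) (X.orbit x) (Gm p)
  let Hm : ∀ o : Quot R.orbitRel, (R.orbit o.out).carrier → (T.orbit (π o).out).carrier :=
    fun o zz => ⟨fm zz.1, orbTrans T (hπout o) (fmrel zz.2)⟩
  let Bval : Quot R.orbitRel → k := fun o => μ.val (R.orbit o.out) (T.orbit (π o).out) (Hm o)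
  have eG : ∀ p, GSet.Equivariant (T.orbit p.out) (X.orbit x) (Gm p) := by
    intro p σ yy
    exact Subtype.ext (hg σ yy.1.1)
  have eH : ∀ o, GSet.Equivariant (R.orbit o.out) (T.orbit (π o).out) (Hm o) := by
    intro o σ zz
    exact Subtype.ext (Subtype.ext (hf σ zz.1.1))
  have stepA : ∀ o : Quot R.orbitRel,
      μ.val (R.orbit o.out) (X.orbit x)
        (fun zz => ⟨g (f zz.1.1), zz.1.2⟩) = Aval (π o) * Bval o := by
    intro o
    have hcomp := hμ.comp (R.orbit o.out) (T.orbit (π o).out) (X.orbit x) (Hm o) (Gm (π o))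
      (orbitTrans' R _) (orbitTrans' T _) (orbitTrans' X _) (eH o) (eG (π o))
    have heq : (Gm (π o)) ∘ (Hm o) =
        (fun zz => (⟨g (f zz.1.1), zz.1.2⟩ : (X.orbit x).carrier)) := by
      funext zz; exact Subtype.ext rfl
    rw [← heq, hcomp]
  have hC : ∀ p : Quot T.orbitRel, ∑ o : {o : Quot R.orbitRel // π o = p}, Bval o.1 = c := by
    intro p
    let w : T.carrier := p.out
    have hw : g w.1 ∈ X.orbitSet x := w.2
    have hSinv : ∀ (σ : G) (z : Z.carrier), z ∈ f ⁻¹' Y.orbitSet w.1 →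
        Z.smul σ z ∈ f ⁻¹' Y.orbitSet w.1 := by
      intro σ z hz
      simp only [Set.mem_preimage] at hz ⊢
      rw [hf σ z]
      exact Y.orbitSet_inv w.1 σ _ hz
    let S : GSet G := Z.restrict (f ⁻¹' Y.orbitSet w.1) hSinv
    haveI : Finite (Quot S.orbitRel) := restrictFinite Z _ _ hZfin
    haveI : Fintype (Quot S.orbitRel) := Fintype.ofFinite _
    have hfy : ∑ᶠ q : Quot S.orbitRel,
        μ.val (S.orbit q.out) (Y.orbit w.1) (fun zz => ⟨f zz.1.1, zz.1.2⟩) = c := hfc w.1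
    have memR : ∀ z : S.carrier, g (f z.1) ∈ X.orbitSet x := by
      intro z
      obtain ⟨σ, hσ⟩ := z.2
      have h0 : g (f z.1) = X.smul σ (g w.1) := by rw [← hσ, hg]
      have h2 := X.orbitSet_inv x σ (g w.1) hw
      rwa [← h0] at h2
    let u : S.carrier → R.carrier := fun z => ⟨z.1, memR z⟩
    let ι : Quot S.orbitRel → Quot R.orbitRel :=
      Quot.map u (fun a b hab => (restrictRel Z ((g ∘ f) ⁻¹' X.orbitSet x) hRinv).mpr ((restrictRel Z (f ⁻¹' Y.orbitSet w.1) hSinv).mp hab))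
    have hι : ∀ q, π (ι q) = p := by
      intro q
      induction q using Quot.ind with | _ z => ?_
      have hmk : (Quot.mk T.orbitRel (fm (u z)) : Quot T.orbitRel) = Quot.mk T.orbitRel w :=
        Quot.sound ((restrictRel Y _ _).mpr (orbSymm Y z.2))
      exact hmk.trans (Quot.out_eq p)
    have h1 : ∀ q : Quot S.orbitRel, R.orbitRel (ι q).out (u q.out) := fun q =>
      outRel R (ι q) (u q.out) (congrArg ι (Quot.out_eq q))
    have memT : ∀ b : (Y.orbit w.1).carrier, g b.1 ∈ X.orbitSet x := by
      intro b
      obtain ⟨σ, hσ⟩ := b.2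
      have h0 : g b.1 = X.smul σ (g w.1) := by rw [← hσ, hg]
      have h2 := X.orbitSet_inv x σ (g w.1) hw
      rwa [← h0] at h2
    have hterm : ∀ q : Quot S.orbitRel,
        μ.val (S.orbit q.out) (Y.orbit w.1) (fun zz => ⟨f zz.1.1, zz.1.2⟩) = Bval (ι q) := by
      intro q
      refine valSquare μ hμ (S.orbit q.out) (Y.orbit w.1) (R.orbit (ι q).out)
        (T.orbit (π (ι q)).out)
        (fun zz => ⟨f zz.1.1, zz.1.2⟩) (Hm (ι q))
        (fun zz => ⟨u zz.1, orbTrans R (h1 q)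
          ((restrictRel Z ((g ∘ f) ⁻¹' X.orbitSet x) hRinv).mpr ((restrictRel Z (f ⁻¹' Y.orbitSet w.1) hSinv).mp zz.2))⟩)
        (fun b => ⟨⟨b.1, memT b⟩, orbTrans T (orbTrans T (hπout (ι q)) (fmrel (h1 q)))
          ((restrictRel Y _ _).mpr (orbTrans Y (orbSymm Y q.out.2) b.2))⟩)
        (orbitTrans' S _) (orbitTrans' Y _) (orbitTrans' R _) (orbitTrans' T _)
        (fun σ zz => Subtype.ext (hf σ zz.1.1)) (eH (ι q))
        (fun σ zz => Subtype.ext (Subtype.ext rfl)) (fun σ b => Subtype.ext (Subtype.ext rfl))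
        ⟨fun a b h => Subtype.ext (Subtype.ext (congrArg (fun t => t.1.1) h)), ?_⟩
        ⟨fun a b h => Subtype.ext (congrArg (fun t => t.1.1) h), ?_⟩
        (fun zz => Subtype.ext (Subtype.ext rfl))
      · intro a'
        have hZa : Z.orbitRel q.out.1 a'.1.1 :=
          (restrictRel Z _ _).mp (orbTrans R (orbSymm R (h1 q)) a'.2)
        have hYa : Y.orbitRel (f q.out.1) (f a'.1.1) := by
          obtain ⟨σ, hσ⟩ := hZa
          exact ⟨σ, by rw [← hf, hσ]⟩
        refine ⟨⟨⟨a'.1.1, orbTrans Y q.out.2 hYa⟩, (restrictRel Z _ _).mpr hZa⟩, ?_⟩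
        exact Subtype.ext (Subtype.ext rfl)
      · intro t
        have hTfm : T.orbitRel (fm (u q.out)) t.1 :=
          orbTrans T (orbSymm T (orbTrans T (hπout (ι q)) (fmrel (h1 q)))) t.2
        refine ⟨⟨t.1.1, orbTrans Y q.out.2 ((restrictRel Y _ _).mp hTfm)⟩, ?_⟩
        exact Subtype.ext (Subtype.ext rfl)
    have hbij : Function.Bijective
        (fun q : Quot S.orbitRel => (⟨ι q, hι q⟩ : {o : Quot R.orbitRel // π o = p})) := by
      constructor
      · intro a b hab
        have hab' : ι a = ι b := congrArg Subtype.val hab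
        clear hab
        revert hab'
        induction a using Quot.ind with | _ a => ?_
        induction b using Quot.ind with | _ b => ?_
        intro hab'
        exact Quot.sound ((restrictRel Z (f ⁻¹' Y.orbitSet w.1) hSinv).mpr
          ((restrictRel Z ((g ∘ f) ⁻¹' X.orbitSet x) hRinv).mp ((quotMkEq R).mp hab')))
      · rintro ⟨o, ho⟩
        revert ho
        induction o using Quot.ind with | _ r => ?_
        intro ho
        have hmk : Quot.mk T.orbitRel (fm r) = Quot.mk T.orbitRel w :=
          ho.trans (Quot.out_eq p).symm
        have memS : f r.1 ∈ Y.orbitSet w.1 :=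
          orbSymm Y ((restrictRel Y _ _).mp ((quotMkEq T).mp hmk))
        exact ⟨Quot.mk _ ⟨r.1, memS⟩,
          Subtype.ext (congrArg (Quot.mk R.orbitRel) (Subtype.ext rfl))⟩
    calc ∑ o : {o : Quot R.orbitRel // π o = p}, Bval o.1
        = ∑ q : Quot S.orbitRel, Bval (ι q) :=
          (Fintype.sum_bijective _ hbij _ _ (fun q => rfl)).symm
      _ = ∑ q : Quot S.orbitRel,
            μ.val (S.orbit q.out) (Y.orbit w.1) (fun zz => ⟨f zz.1.1, zz.1.2⟩) :=
          Finset.sum_congr rfl (fun q _ => (hterm q).symm)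
      _ = c := by rw [← finsum_eq_sum_of_fintype]; exact hfy
  have hgx : ∑ p : Quot T.orbitRel, Aval p = d := by
    rw [← finsum_eq_sum_of_fintype]
    exact hgc x
  have main : ∑ᶠ o : Quot R.orbitRel,
      μ.val (R.orbit o.out) (X.orbit x) (fun zz => ⟨g (f zz.1.1), zz.1.2⟩) = d * c := by
    rw [finsum_eq_sum_of_fintype]
    calc ∑ o : Quot R.orbitRel,
          μ.val (R.orbit o.out) (X.orbit x) (fun zz => ⟨g (f zz.1.1), zz.1.2⟩)
        = ∑ o : Quot R.orbitRel, Aval (π o) * Bval o :=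
          Finset.sum_congr rfl (fun o _ => stepA o)
      _ = ∑ p : Quot T.orbitRel, ∑ o : {o : Quot R.orbitRel // π o = p},
            Aval (π o.1) * Bval o.1 := (Fintype.sum_fiberwise π _).symm
      _ = ∑ p : Quot T.orbitRel, Aval p * c := by
          refine Finset.sum_congr rfl (fun p _ => ?_)
          rw [← hC p, Finset.mul_sum]
          exact Finset.sum_congr rfl (fun o _ => by rw [congrArg Aval o.2])
      _ = (∑ p : Quot T.orbitRel, Aval p) * c := by rw [Finset.sum_mul]
      _ = d * c := by rw [hgx]
  exact main
end

section
/- Let E be the category of finitary smooth G-sets for a pro-oligomorphic group G. Then the only degree function on E valued in any ring k is the trivial one: ν(f) = 1 for every regular epimorphism f of nonempty objects. -/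
namespace GSet

variable {G : Type} [Group G] [TopologicalSpace G]

/-- Disjoint union of two `G`-sets. -/
def sumG (X Y : GSet G) : GSet G where
  carrier := X.carrier ⊕ Y.carrier
  smul g := Sum.map (X.smul g) (Y.smul g)
  one_smul x := by cases x <;> simp [X.one_smul, Y.one_smul]
  mul_smul g h x := by cases x <;> simp [X.mul_smul, Y.mul_smul]
  smooth x := by
    cases x with
    | inl a => convert X.smooth a using 1; ext g; simp
    | inr b => convert Y.smooth b using 1; ext g; simp

lemma finitary_of_surj {X Y : GSet G} (h : X.Finitary) (f : X.carrier → Y.carrier)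
    (hf : Equivariant X Y f) (hs : Function.Surjective f) : Y.Finitary := by
  haveI : Finite (Quot X.orbitRel) := h
  refine Finite.of_surjective (α := Quot X.orbitRel)
    (Quot.lift (fun x => Quot.mk Y.orbitRel (f x)) ?_) ?_
  · rintro a b ⟨g, rfl⟩
    exact Quot.sound ⟨g, (hf g a).symm⟩
  · rintro ⟨y⟩
    obtain ⟨x, rfl⟩ := hs y
    exact ⟨Quot.mk _ x, rfl⟩

lemma finitary_sum {X Y : GSet G} (hX : X.Finitary) (hY : Y.Finitary) :
    (X.sumG Y).Finitary := by
  haveI : Finite (Quot X.orbitRel) := hX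
  haveI : Finite (Quot Y.orbitRel) := hY
  refine Finite.of_surjective (α := Quot X.orbitRel ⊕ Quot Y.orbitRel)
    (Sum.elim
      (Quot.lift (fun x => Quot.mk (X.sumG Y).orbitRel (Sum.inl x))
        (by rintro a b ⟨g, rfl⟩; exact Quot.sound ⟨g, rfl⟩))
      (Quot.lift (fun y => Quot.mk (X.sumG Y).orbitRel (Sum.inr y))
        (by rintro a b ⟨g, rfl⟩; exact Quot.sound ⟨g, rfl⟩))) ?_
  rintro ⟨(x | y)⟩
  · exact ⟨Sum.inl (Quot.mk _ x), rfl⟩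
  · exact ⟨Sum.inr (Quot.mk _ y), rfl⟩

instance : Subsingleton (GSet.pt (G := G)).carrier :=
  inferInstanceAs (Subsingleton PUnit.{1})

instance : Finite (GSet.pt (G := G)).carrier :=
  inferInstanceAs (Finite PUnit.{1})

end GSet

/-- For the category of finitary smooth `G`-sets of a pro-oligomorphic group `G`, every
degree function (a `k`-valued assignment on surjections of nonempty objects that is `1` on
isomorphisms, multiplicative under composition, and invariant under base change) is
trivial: `ν(f) = 1` for every surjection `f` of nonempty finitary smooth `G`-sets. -/
theorem stmt15 (G : Type) [Group G] [TopologicalSpace G] (k : Type) [CommRing k]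
    (ν : (Y X : GSet G) → (Y.carrier → X.carrier) → k)
    (hiso : ∀ (Y X : GSet G) (f : Y.carrier → X.carrier),
      Y.Finitary → X.Finitary → Nonempty Y.carrier → Nonempty X.carrier →
      GSet.Equivariant Y X f → Function.Bijective f → ν Y X f = 1)
    (hcomp : ∀ (Z Y X : GSet G) (f : Z.carrier → Y.carrier) (g : Y.carrier → X.carrier),
      Z.Finitary → Y.Finitary → X.Finitary →
      Nonempty Z.carrier → Nonempty Y.carrier → Nonempty X.carrier →
      GSet.Equivariant Z Y f → GSet.Equivariant Y X g →
      Function.Surjective f → Function.Surjective g →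
      ν Z X (g ∘ f) = ν Y X g * ν Z Y f)
    (hbase : ∀ (Y X X' : GSet G) (f : Y.carrier → X.carrier) (g : X'.carrier → X.carrier)
      (_ : Y.Finitary) (_ : X.Finitary) (_ : X'.Finitary)
      (_ : Nonempty Y.carrier) (_ : Nonempty X.carrier) (_ : Nonempty X'.carrier)
      (hf : GSet.Equivariant Y X f) (hg : GSet.Equivariant X' X g)
      (_ : Function.Surjective f),
      ν ((Y.prodG X').restrict {p | f p.1 = g p.2} (fun σ p hp => by
          simp only [Set.mem_setOf_eq] at hp ⊢
          show f (Y.smul σ p.1) = g (X'.smul σ p.2)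
          rw [hf σ p.1, hg σ p.2, hp]))
        X' (fun p => p.1.2) = ν Y X f)
    (Y X : GSet G) (hYfin : Y.Finitary) (hXfin : X.Finitary)
    (hYne : Nonempty Y.carrier) (hXne : Nonempty X.carrier)
    (f : Y.carrier → X.carrier) (hf : GSet.Equivariant Y X f)
    (hsurj : Function.Surjective f) :
    ν Y X f = 1 := by
  classical
  set W := Y.sumG GSet.pt with hW
  set Z := X.sumG GSet.pt with hZ
  set F : W.carrier → Z.carrier := Sum.map f id with hF
  have hptfin : (GSet.pt : GSet G).Finitary :=
    Finite.of_surjective (Quot.mk _) Quot.mk_surjective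
  have hWfin : W.Finitary := GSet.finitary_sum hYfin hptfin
  have hZfin : Z.Finitary := GSet.finitary_sum hXfin hptfin
  have hWne : Nonempty W.carrier := ⟨Sum.inr PUnit.unit⟩
  have hZne : Nonempty Z.carrier := ⟨Sum.inr PUnit.unit⟩
  have hFeq : GSet.Equivariant W Z F := by
    rintro g (y | u)
    · exact congrArg Sum.inl (hf g y)
    · rfl
  have hFsurj : Function.Surjective F := by
    rintro (x | u)
    · obtain ⟨y, rfl⟩ := hsurj x
      exact ⟨Sum.inl y, rfl⟩
    · exact ⟨Sum.inr u, rfl⟩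
  have hinl : GSet.Equivariant X Z Sum.inl := fun g x => rfl
  have hinr : GSet.Equivariant GSet.pt Z Sum.inr := fun g u => rfl
  have h1 := hbase W Z X F Sum.inl hWfin hZfin hXfin hWne hZne hXne hFeq hinl hFsurj
  have h2 := hbase W Z GSet.pt F Sum.inr hWfin hZfin hptfin
    hWne hZne ⟨PUnit.unit⟩ hFeq hinr hFsurj
  -- explicit invariance proofs for the two pullbacks
  have pf1 : ∀ σ p, p ∈ {p : (W.prodG X).carrier | F p.1 = Sum.inl p.2} →
      (W.prodG X).smul σ p ∈ {p : (W.prodG X).carrier | F p.1 = Sum.inl p.2} := by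
    rintro σ ⟨w, x⟩ hp
    simp only [Set.mem_setOf_eq] at hp ⊢
    show F (W.smul σ w) = Sum.inl (X.smul σ x)
    rw [hFeq σ w, hp]; rfl
  have pf2 : ∀ σ p, p ∈ {p : (W.prodG GSet.pt).carrier | F p.1 = Sum.inr p.2} →
      (W.prodG GSet.pt).smul σ p ∈ {p : (W.prodG GSet.pt).carrier | F p.1 = Sum.inr p.2} := by
    rintro σ ⟨w, u⟩ hp
    simp only [Set.mem_setOf_eq] at hp ⊢
    show F (W.smul σ w) = Sum.inr u
    rw [hFeq σ w, hp]; rfl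
  set P1 := (W.prodG X).restrict {p : (W.prodG X).carrier | F p.1 = Sum.inl p.2} pf1 with hP1d
  set P2 := (W.prodG GSet.pt).restrict
    {p : (W.prodG GSet.pt).carrier | F p.1 = Sum.inr p.2} pf2 with hP2d
  have h1' : ν P1 X (fun p => p.1.2) = ν W Z F := h1
  have h2' : ν P2 GSet.pt (fun p => p.1.2) = ν W Z F := h2
  -- P2 is a point
  have hP2sub : Subsingleton P2.carrier := by
    constructor
    rintro ⟨⟨(a | a), u⟩, ha⟩ ⟨⟨(b | b), v⟩, hb⟩
    · exact absurd ha (by intro h; exact Sum.inl_ne_inr h)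
    · exact absurd ha (by intro h; exact Sum.inl_ne_inr h)
    · exact absurd hb (by intro h; exact Sum.inl_ne_inr h)
    · exact Subtype.ext (Prod.ext (congrArg Sum.inr (Subsingleton.elim a b))
        (Subsingleton.elim u v))
  have hP2ne : Nonempty P2.carrier := ⟨⟨(Sum.inr PUnit.unit, PUnit.unit), rfl⟩⟩
  haveI := hP2sub
  have hP2fin : P2.Finitary := by
    haveI : Finite P2.carrier := Finite.of_subsingleton
    exact Finite.of_surjective (Quot.mk _) Quot.mk_surjective
  have hproj2 : Function.Bijective (fun p : P2.carrier => p.1.2) := by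
    constructor
    · intro a b _; exact Subsingleton.elim a b
    · intro u; exact ⟨hP2ne.some, Subsingleton.elim _ _⟩
  have h2'' : ν P2 GSet.pt (fun p => p.1.2) = 1 :=
    hiso P2 GSet.pt _ hP2fin hptfin hP2ne ⟨PUnit.unit⟩
      (fun g p => Subsingleton.elim _ _) hproj2
  -- the iso e : Y ≃ P1
  set e : Y.carrier → P1.carrier := fun y => ⟨(Sum.inl y, f y), rfl⟩ with hee
  have heeq : GSet.Equivariant Y P1 e := by
    intro g y
    apply Subtype.ext
    exact Prod.ext rfl (hf g y)
  have hebij : Function.Bijective e := by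
    constructor
    · intro a b hab
      have := congrArg (fun p : P1.carrier => p.1.1) hab
      exact Sum.inl.inj this
    · rintro ⟨⟨(y | u), x⟩, hp⟩
      · refine ⟨y, Subtype.ext (Prod.ext rfl ?_)⟩
        have hx : Sum.inl (f y) = Sum.inl x := hp
        exact Sum.inl.inj hx
      · exact absurd hp (by intro h; exact Sum.inr_ne_inl h)
  have hP1fin : P1.Finitary := GSet.finitary_of_surj hYfin e heeq hebij.2
  have hP1ne : Nonempty P1.carrier := ⟨e hYne.some⟩
  have hproj1eq : GSet.Equivariant P1 X (fun p => p.1.2) := by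
    rintro g ⟨⟨w, x⟩, hp⟩; rfl
  have hproj1surj : Function.Surjective (fun p : P1.carrier => p.1.2) := by
    intro x
    obtain ⟨y, rfl⟩ := hsurj x
    exact ⟨e y, rfl⟩
  have hc := hcomp Y P1 X e (fun p => p.1.2) hYfin hP1fin hXfin hYne hP1ne hXne
    heeq hproj1eq hebij.2 hproj1surj
  have hce : ν Y P1 e = 1 := hiso Y P1 e hYfin hP1fin hYne hP1ne heeq hebij
  have hfe : (fun p : P1.carrier => p.1.2) ∘ e = f := rfl
  rw [hfe, hce, mul_one] at hc
  rw [hc, h1', ← h2', h2'']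
end
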